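/- Under the assumptions of the pessimism regret lemma (f̂_L ≤ Q pointwise and π̂ greedy w.r.t. f̂_L), taking expectation over a state distribution μ yields: E_{S∼μ}[Q(S, π*(S)) - Q(S, π̂(S))] ≤ E_{S∼μ}[Q(S, π*(S)) - f̂_L(S, π*(S))]. That is, the average regret is bounded by the estimation error of the lower bound at the optimal action only. -/

import Mathlib

open MeasureTheory

theorem stmt9_general {S A : Type*} [MeasurableSpace S]
    (μ : Measure S)
    (Q fL : S → A → ℝ) (hlow : ∀ s a, fL s a ≤ Q s a)
    (πhat πstar : S → A)
    (hgreedy : ∀ s a, fL s a ≤ fL s (πhat s))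
    (hint1 : Integrable (fun s => Q s (πstar s) - Q s (πhat s)) μ)
    (hint2 : Integrable (fun s => Q s (πstar s) - fL s (πstar s)) μ) :
    ∫ s, (Q s (πstar s) - Q s (πhat s)) ∂μ
      ≤ ∫ s, (Q s (πstar s) - fL s (πstar s)) ∂μ := by
  refine integral_mono hint1 hint2 fun s => ?_
  have hpess : fL s (πstar s) ≤ Q s (πhat s) := (hgreedy s (πstar s)).trans (hlow s (πhat s))
  exact sub_le_sub_left hpess _

theorem stmt9 {S A : Type*} [MeasurableSpace S] [Fintype A] [Nonempty A]
    (μ : Measure S) [IsProbabilityMeasure μ]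
    (Q fL : S → A → ℝ) (hlow : ∀ s a, fL s a ≤ Q s a)
    (πhat πstar : S → A)
    (hgreedy : ∀ s a, fL s a ≤ fL s (πhat s))
    (hopt : ∀ s a, Q s a ≤ Q s (πstar s))
    (hint1 : Integrable (fun s => Q s (πstar s) - Q s (πhat s)) μ)
    (hint2 : Integrable (fun s => Q s (πstar s) - fL s (πstar s)) μ) :
    ∫ s, (Q s (πstar s) - Q s (πhat s)) ∂μ
      ≤ ∫ s, (Q s (πstar s) - fL s (πstar s)) ∂μ :=
  stmt9_general μ Q fL hlow πhat πstar hgreedy hint1 hint2
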